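/- arXiv:1606.02640 — 2 statements merged into one kernel-verified Lean document; each statement's English description precedes it below -/
import Mathlib

section
/- Let ρ, α > 0 and let h : ℝ → ℝ be continuous with 0 ≤ h(s) ≤ ρ/2 for all s. Suppose U ∈ H¹(ℝ) is a weak solution of -U'' + αρU + h(αU²)αU = (U⁺)³, where U⁺ = max(U,0). Then U ≥ 0 almost everywhere; and if U is not identically zero, then U > 0 everywhere. -/
/-!
Where `U < 0` the equation reads `U'' = α (ρ + h) U < 0`. As `U, U' ∈ L²`, both `U²` and its
derivative `2 U U'` are integrable, so `U → 0` at `±∞`; a negative value of `U` would therefore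
give a negative global minimum, where `U'' ≥ 0`. Once `U ≥ 0`, a zero of `U` is a minimum, so
`U = U' = 0` there, and since `|U''| ≤ (C + U²) |U|`, Grönwall's inequality for `(U, U')` gives
`U ≡ 0`.
-/

open MeasureTheory Real Filter

open Set Topology

theorem IsLocalMin.nonneg_of_hasDerivAt_of_hasDerivAt {f f' : ℝ → ℝ} {a f'' : ℝ}
    (hmin : IsLocalMin f a) (hf : ∀ᶠ x in 𝓝 a, HasDerivAt f (f' x) x)
    (hf' : HasDerivAt f' f'' a) : 0 ≤ f'' := by
  by_contra! hneg
  have hcrit : f' a = 0 := hmin.hasDerivAt_eq_zero hf.self_of_nhds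
  have hsign := eventually_nhdsWithin_sign_eq_of_deriv_neg (hf'.deriv ▸ hneg) hcrit
  obtain ⟨δ, hδ, hball⟩ := Metric.eventually_nhds_iff_ball.mp (hmin.and (hf.and hsign))
  have hIcc : Icc a (a + δ / 2) ⊆ Metric.ball a δ := fun x hx => by
    rw [Metric.mem_ball, Real.dist_eq, abs_of_nonneg (by linarith [hx.1])]
    linarith [hx.2]
  obtain ⟨c, hc, hslope⟩ := exists_hasDerivAt_eq_slope f f' (by linarith : a < a + δ / 2)
    (fun x hx => (hball x (hIcc hx)).2.1.continuousAt.continuousWithinAt)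
    (fun x hx => (hball x (hIcc (Ioo_subset_Icc_self hx))).2.1)
  have hdecr : f' c < 0 := sign_eq_neg_one_iff.1 <|
    (hball c (hIcc (Ioo_subset_Icc_self hc))).2.2.trans
      (sign_eq_neg_one_iff.2 (by linarith [hc.1]))
  have hincr : 0 ≤ (f (a + δ / 2) - f a) / (a + δ / 2 - a) :=
    div_nonneg (sub_nonneg.2 (hball _ (hIcc ⟨by linarith, le_rfl⟩)).1) (by linarith)
  linarith

theorem tendsto_cocompact_zero_of_memLp_two {u u' : ℝ → ℝ} (hu : ∀ x, HasDerivAt u (u' x) x)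
    (hu2 : MemLp u 2 volume) (hu'2 : MemLp u' 2 volume) : Tendsto u (cocompact ℝ) (𝓝 0) := by
  have hderiv : ∀ x, HasDerivAt (fun x => u x ^ 2) (2 * u x * u' x) x := fun x => by
    simpa using (hu x).fun_pow 2
  have hint : Integrable (fun x => u x ^ 2) := hu2.integrable_sq
  have hint' : Integrable (fun x => 2 * u x * u' x) := by
    simpa [mul_assoc] using (hu2.integrable_mul hu'2).const_mul 2
  have hsq : Tendsto (fun x => u x ^ 2) (cocompact ℝ) (𝓝 0) := by
    rw [cocompact_eq_atBot_atTop]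
    exact (tendsto_zero_of_hasDerivAt_of_integrableOn_Iic (a := 0) (fun x _ => hderiv x)
      hint'.integrableOn hint.integrableOn).sup
      (tendsto_zero_of_hasDerivAt_of_integrableOn_Ioi (a := 0) (fun x _ => hderiv x)
        hint'.integrableOn hint.integrableOn)
  rw [tendsto_zero_iff_abs_tendsto_zero]
  simpa only [Function.comp_def, Real.sqrt_sq_eq_abs, Real.sqrt_zero] using hsq.sqrt

theorem nonneg_of_tendsto_cocompact_of_deriv2_neg {u u' u'' : ℝ → ℝ}
    (hu : ∀ x, HasDerivAt u (u' x) x) (hu' : ∀ x, HasDerivAt u' (u'' x) x)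
    (hlim : Tendsto u (cocompact ℝ) (𝓝 0)) (hneg : ∀ x, u x < 0 → u'' x < 0) (x : ℝ) :
    0 ≤ u x := by
  by_contra! hx
  have hcont : Continuous u := Differentiable.continuous fun x => (hu x).differentiableAt
  obtain ⟨m, hm⟩ := hcont.exists_forall_le' x <|
    (hlim.eventually (lt_mem_nhds hx)).mono fun _ => le_of_lt
  have hmin : IsLocalMin u m := Eventually.of_forall hm
  exact (hneg m ((hm x).trans_lt hx)).not_ge <|
    hmin.nonneg_of_hasDerivAt_of_hasDerivAt (Eventually.of_forall hu) (hu' m)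

theorem eq_zero_of_abs_deriv2_le_right {u u' u'' φ : ℝ → ℝ}
    (hu : ∀ x, HasDerivAt u (u' x) x) (hu' : ∀ x, HasDerivAt u' (u'' x) x)
    (hφ : Continuous φ) (hbound : ∀ x, |u'' x| ≤ φ x * |u x|) {a b : ℝ}
    (ha : u a = 0) (ha' : u' a = 0) (hab : a ≤ b) : u b = 0 := by
  obtain ⟨M, hM⟩ := isCompact_Icc.exists_bound_of_continuousOn (s := Icc a b) hφ.continuousOn
  have hsystem : ∀ x ∈ Ico a b, ‖(u' x, u'' x)‖ ≤ max 1 M * ‖(u x, u' x)‖ := by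
    intro x hx
    have hφx : φ x ≤ M := (le_abs_self _).trans (hM x (Ico_subset_Icc_self hx))
    simp only [Prod.norm_def, Real.norm_eq_abs]
    refine max_le ?_ ?_
    · nlinarith [le_max_left 1 M, le_max_right |u x| |u' x|, abs_nonneg (u' x)]
    · nlinarith [hbound x, le_max_left 1 M, le_max_right 1 M, le_max_left |u x| |u' x|,
        abs_nonneg (u x), abs_nonneg (u' x)]
  have hpair : ∀ x, HasDerivAt (fun x => (u x, u' x)) (u' x, u'' x) x :=
    fun x => (hu x).prodMk (hu' x)
  have hzero := eq_zero_of_abs_deriv_le_mul_abs_self_of_eq_zero_right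
    (fun x _ => (hpair x).continuousAt.continuousWithinAt) (fun x _ => (hpair x).hasDerivWithinAt)
    (by simp [ha, ha']) hsystem b ⟨hab, le_rfl⟩
  exact congrArg Prod.fst hzero

theorem eq_zero_of_abs_deriv2_le {u u' u'' φ : ℝ → ℝ}
    (hu : ∀ x, HasDerivAt u (u' x) x) (hu' : ∀ x, HasDerivAt u' (u'' x) x)
    (hφ : Continuous φ) (hbound : ∀ x, |u'' x| ≤ φ x * |u x|) {a : ℝ}
    (ha : u a = 0) (ha' : u' a = 0) (x : ℝ) : u x = 0 := by
  rcases le_total a x with hax | hxa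
  · exact eq_zero_of_abs_deriv2_le_right hu hu' hφ hbound ha ha' hax
  · simpa using eq_zero_of_abs_deriv2_le_right (u := fun x => u (a - x))
      (u' := fun x => -u' (a - x)) (u'' := fun x => u'' (a - x)) (φ := fun x => φ (a - x))
      (fun x => (hu _).comp_const_sub a x)
      (fun x => by simpa using ((hu' _).comp_const_sub a x).fun_neg) (by fun_prop)
      (fun x => hbound (a - x)) (a := 0) (b := a - x) (by simpa) (by simpa) (by linarith)

theorem positivity_of_solutions_general (ρ α : ℝ) (hρ : 0 < ρ) (hα : 0 < α)
    (h : ℝ → ℝ)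
    (hh_bounds : ∀ s : ℝ, 0 ≤ h s ∧ h s ≤ ρ / 2)
    (U U' U'' : ℝ → ℝ)
    (hderiv : ∀ x, HasDerivAt U (U' x) x)
    (hderiv' : ∀ x, HasDerivAt U' (U'' x) x)
    (hU_L2 : MemLp U 2 volume) (hU'_L2 : MemLp U' 2 volume)
    (hODE : ∀ x, -(U'' x) + α * ρ * U x + h (α * (U x) ^ 2) * α * U x
      = (max (U x) 0) ^ 3) :
    (∀ᵐ x : ℝ, 0 ≤ U x) ∧
    (¬ (∀ x, U x = 0) → ∀ x, 0 < U x) := by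
  have hU'' : ∀ x, U'' x = α * (ρ + h (α * U x ^ 2)) * U x - max (U x) 0 ^ 3 :=
    fun x => by linear_combination -(hODE x)
  have hconcave : ∀ x, U x < 0 → U'' x < 0 := by
    intro x hx
    have hcoeff : 0 < α * (ρ + h (α * U x ^ 2)) :=
      mul_pos hα (add_pos_of_pos_of_nonneg hρ (hh_bounds _).1)
    rw [hU'', max_eq_right hx.le]
    simpa using mul_neg_of_pos_of_neg hcoeff hx
  have hnonneg : ∀ x, 0 ≤ U x := nonneg_of_tendsto_cocompact_of_deriv2_neg hderiv hderiv'
    (tendsto_cocompact_zero_of_memLp_two hderiv hU_L2 hU'_L2) hconcave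
  refine ⟨ae_of_all _ hnonneg, fun hne x => (hnonneg x).lt_of_ne' fun hx => hne ?_⟩
  have hmin : IsLocalMin U x := Eventually.of_forall fun y => hx ▸ hnonneg y
  have hbound : ∀ y, |U'' y| ≤ (α * (ρ + ρ / 2) + U y ^ 2) * |U y| := by
    intro y
    have hy := hnonneg y
    have hhy := hh_bounds (α * U y ^ 2)
    rw [hU'', max_eq_left hy, abs_of_nonneg hy, abs_le]
    constructor <;> nlinarith [mul_nonneg hα.le hhy.1, mul_le_mul_of_nonneg_left hhy.2 hα.le,
      mul_nonneg hα.le hρ.le, pow_nonneg hy 3]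
  have hcont : Continuous U := Differentiable.continuous fun x => (hderiv x).differentiableAt
  exact eq_zero_of_abs_deriv2_le hderiv hderiv' (by fun_prop) hbound hx
    (hmin.hasDerivAt_eq_zero (hderiv x))

theorem positivity_of_solutions (ρ α : ℝ) (hρ : 0 < ρ) (hα : 0 < α)
    (h : ℝ → ℝ) (hh_cont : Continuous h)
    (hh_bounds : ∀ s : ℝ, 0 ≤ h s ∧ h s ≤ ρ / 2)
    (U U' U'' : ℝ → ℝ)
    (hderiv : ∀ x, HasDerivAt U (U' x) x)
    (hderiv' : ∀ x, HasDerivAt U' (U'' x) x)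
    (hU_L2 : MemLp U 2 volume) (hU'_L2 : MemLp U' 2 volume)
    (hODE : ∀ x, -(U'' x) + α * ρ * U x + h (α * (U x) ^ 2) * α * U x
      = (max (U x) 0) ^ 3) :
    (∀ᵐ x : ℝ, 0 ≤ U x) ∧
    (¬ (∀ x, U x = 0) → ∀ x, 0 < U x) :=
  positivity_of_solutions_general ρ α hρ hα h hh_bounds U U' U'' hderiv hderiv' hU_L2 hU'_L2 hODE
end

section
/- Let α, ρ > 0, b > 0, and let (Uₙ) ⊂ H¹(ℝ) be a sequence with A(Uₙ) bounded and A'(Uₙ)[Uₙ] = o(‖Uₙ‖_{H¹}), where A(U) = (1/2)∫((U')²+αρU²) + (1/2)∫G(α(U⁺)²) - (1/4)∫(U⁺)⁴ and G satisfies |G(s)| ≤ c(s^{3/2}+s^{4/3}) and |g(s)s| ≤ c(s^{3/2}+s^{4/3}) with G' = g. Then, for α > 0 sufficiently small (depending only on c and ρ), the sequence (Uₙ) is bounded in H¹(ℝ). -/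
/-!
`A(u) - (3/8) A'(u)[u]` equals `(1/8)(‖u'‖₂² + αρ‖u‖₂² + ∫(u⁺)⁴)` plus the terms in `G` and `g`,
which the growth bounds make at most `c(α^{3/2} + α^{4/3})(‖u‖₂² + ∫(u⁺)⁴) = α·o(1)·(‖u‖₂² + ∫(u⁺)⁴)`
as `α → 0`. For small `α` they are absorbed by the positive terms; as `∫(u⁺)⁴` itself appears with a
positive coefficient, no Sobolev embedding is needed. This leaves
`m ‖uₙ‖²_{H¹} ≤ A(uₙ) - (3/8) A'(uₙ)[uₙ] ≤ C + o(1) ‖uₙ‖_{H¹}`.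
-/

open MeasureTheory Real Filter Topology

theorem rpow_le_rpow_add_rpow {u a b p : ℝ} (hu : 0 ≤ u) (ha : 0 ≤ a) (hap : a ≤ p)
    (hpb : p ≤ b) : u ^ p ≤ u ^ a + u ^ b := by
  rcases le_total u 1 with h1 | h1
  · linarith [rpow_le_rpow_of_exponent_ge' hu h1 ha hap, rpow_nonneg hu b]
  · linarith [rpow_le_rpow_of_exponent_le h1 hpb, rpow_nonneg hu a]

theorem mul_sq_rpow_le {α u p : ℝ} (hα : 0 ≤ α) (hu : 0 ≤ u) (hp₁ : 1 ≤ p) (hp₂ : p ≤ 2) :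
    (α * u ^ 2) ^ p ≤ α ^ p * (u ^ 2 + u ^ 4) := by
  have hsq : (u ^ 2) ^ p = u ^ (2 * p) := by
    rw [← rpow_natCast, ← rpow_mul hu, Nat.cast_ofNat]
  rw [mul_rpow hα (sq_nonneg u), hsq]
  gcongr
  have h := rpow_le_rpow_add_rpow hu zero_le_two (b := 4) (p := 2 * p) (by linarith) (by linarith)
  rwa [rpow_two, show (4 : ℝ) = (4 : ℕ) by norm_num, rpow_natCast] at h

theorem abs_comp_mul_sq_posPart_le {F : ℝ → ℝ} {c : ℝ}
    (hF : ∀ s, 0 ≤ s → |F s| ≤ c * (s ^ (3 / 2 : ℝ) + s ^ (4 / 3 : ℝ))) (hc : 0 ≤ c)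
    {α : ℝ} (hα : 0 ≤ α) (u : ℝ) :
    |F (α * max u 0 ^ 2)| ≤ c * (α ^ (3 / 2 : ℝ) + α ^ (4 / 3 : ℝ)) * (u ^ 2 + max u 0 ^ 4) := by
  have hu : 0 ≤ max u 0 := le_max_right u 0
  have hsq : max u 0 ^ 2 ≤ u ^ 2 := by
    rcases le_total u 0 with h | h <;> simp [h, sq_nonneg]
  calc |F (α * max u 0 ^ 2)|
      ≤ c * ((α * max u 0 ^ 2) ^ (3 / 2 : ℝ) + (α * max u 0 ^ 2) ^ (4 / 3 : ℝ)) :=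
        hF _ (by positivity)
    _ ≤ c * (α ^ (3 / 2 : ℝ) * (max u 0 ^ 2 + max u 0 ^ 4)
          + α ^ (4 / 3 : ℝ) * (max u 0 ^ 2 + max u 0 ^ 4)) := by
        gcongr <;> exact mul_sq_rpow_le hα hu (by norm_num) (by norm_num)
    _ ≤ c * (α ^ (3 / 2 : ℝ) + α ^ (4 / 3 : ℝ)) * (u ^ 2 + max u 0 ^ 4) := by
        rw [← add_mul, ← mul_assoc]
        gcongr

theorem abs_integral_comp_mul_sq_posPart_le {X : Type*} [MeasurableSpace X] {μ : Measure X}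
    {F : ℝ → ℝ} {c α : ℝ}
    (hF : ∀ s, 0 ≤ s → |F s| ≤ c * (s ^ (3 / 2 : ℝ) + s ^ (4 / 3 : ℝ))) (hc : 0 ≤ c)
    (hα : 0 ≤ α) {u : X → ℝ} (hu₂ : Integrable (fun x => u x ^ 2) μ)
    (hu₄ : Integrable (fun x => max (u x) 0 ^ 4) μ) :
    |∫ x, F (α * max (u x) 0 ^ 2) ∂μ| ≤
      c * (α ^ (3 / 2 : ℝ) + α ^ (4 / 3 : ℝ)) * ((∫ x, u x ^ 2 ∂μ) + ∫ x, max (u x) 0 ^ 4 ∂μ) := by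
  rw [← integral_add hu₂ hu₄, ← integral_const_mul]
  have hbound : Integrable (fun x => c * (α ^ (3 / 2 : ℝ) + α ^ (4 / 3 : ℝ)) *
      (u x ^ 2 + max (u x) 0 ^ 4)) μ := (hu₂.add hu₄).const_mul _
  exact norm_integral_le_of_norm_le (f := fun x => F (α * max (u x) 0 ^ 2)) hbound
    (ae_of_all _ fun x => abs_comp_mul_sq_posPart_le hF hc hα (u x))

theorem eventually_growth_coeff_le (c : ℝ) {ρ : ℝ} (hρ : 0 < ρ) :
    ∀ᶠ α in 𝓝[>] (0 : ℝ), c * (α ^ (3 / 2 : ℝ) + α ^ (4 / 3 : ℝ)) ≤ min (α * ρ / 16) (1 / 8) := by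
  set κ : ℝ → ℝ := fun α => c * (α ^ (1 / 2 : ℝ) + α ^ (1 / 3 : ℝ))
  have hκ : Tendsto κ (𝓝 0) (𝓝 0) := by
    have : ContinuousAt κ 0 := by
      apply ContinuousAt.mul continuousAt_const
      exact (continuousAt_id.rpow_const (Or.inr (by norm_num))).add
        (continuousAt_id.rpow_const (Or.inr (by norm_num)))
    simpa [κ] using this.tendsto
  have hακ : Tendsto (fun α => α * κ α) (𝓝 0) (𝓝 0) := by
    simpa using tendsto_id.mul hκ
  have hρ16 : (0 : ℝ) < ρ / 16 := by positivity
  filter_upwards [self_mem_nhdsWithin,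
    nhdsWithin_le_nhds (hκ.eventually (gt_mem_nhds hρ16)),
    nhdsWithin_le_nhds (hακ.eventually (gt_mem_nhds (by norm_num : (0 : ℝ) < 1 / 8)))]
    with α hα hκ_small hακ_small
  have hsplit : c * (α ^ (3 / 2 : ℝ) + α ^ (4 / 3 : ℝ)) = α * κ α := by
    rw [show (3 / 2 : ℝ) = 1 / 2 + 1 by norm_num, show (4 / 3 : ℝ) = 1 / 3 + 1 by norm_num,
      rpow_add_one hα.ne', rpow_add_one hα.ne']
    ring
  rw [hsplit]
  refine le_min ?_ hακ_small.le
  have : α * κ α ≤ α * (ρ / 16) := mul_le_mul_of_nonneg_left hκ_small.le hα.le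
  linarith

section Action

variable {X : Type*} [MeasurableSpace X] (μ : Measure X) (ρ α : ℝ)

noncomputable def action (G : ℝ → ℝ) (u u' : X → ℝ) : ℝ :=
  1 / 2 * (∫ x, (u' x ^ 2 + α * ρ * u x ^ 2) ∂μ) + 1 / 2 * (∫ x, G (α * max (u x) 0 ^ 2) ∂μ)
    - 1 / 4 * ∫ x, max (u x) 0 ^ 4 ∂μ

/-- `A'(u)[u]`, when `g = G'`. -/
noncomputable def nehariFunctional (g : ℝ → ℝ) (u u' : X → ℝ) : ℝ :=
  (∫ x, (u' x ^ 2 + α * ρ * u x ^ 2) ∂μ)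
    + (∫ x, g (α * max (u x) 0 ^ 2) * (α * max (u x) 0 ^ 2) ∂μ) - ∫ x, max (u x) 0 ^ 4 ∂μ

variable {μ ρ α}

theorem min_mul_sq_norm_le_action_sub_nehari {c : ℝ} (hc : 0 ≤ c) (hα : 0 ≤ α)
    {g G : ℝ → ℝ}
    (hG : ∀ s, 0 ≤ s → |G s| ≤ c * (s ^ (3 / 2 : ℝ) + s ^ (4 / 3 : ℝ)))
    (hg : ∀ s, 0 ≤ s → |g s * s| ≤ c * (s ^ (3 / 2 : ℝ) + s ^ (4 / 3 : ℝ)))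
    (hsmall : c * (α ^ (3 / 2 : ℝ) + α ^ (4 / 3 : ℝ)) ≤ min (α * ρ / 16) (1 / 8))
    {u u' : X → ℝ} (hu' : Integrable (fun x => u' x ^ 2) μ)
    (hu₂ : Integrable (fun x => u x ^ 2) μ) (hu₄ : Integrable (fun x => max (u x) 0 ^ 4) μ) :
    min (1 / 8) (α * ρ / 16) * ((∫ x, u' x ^ 2 ∂μ) + ∫ x, u x ^ 2 ∂μ) ≤
      action μ ρ α G u u' - 3 / 8 * nehariFunctional μ ρ α g u u' := by
  have hquad : ∫ x, (u' x ^ 2 + α * ρ * u x ^ 2) ∂μ =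
      (∫ x, u' x ^ 2 ∂μ) + α * ρ * ∫ x, u x ^ 2 ∂μ := by
    rw [integral_add hu' (hu₂.const_mul _), integral_const_mul]
  have hG_int := abs_integral_comp_mul_sq_posPart_le hG hc hα hu₂ hu₄
  have hg_int := abs_integral_comp_mul_sq_posPart_le (F := fun s => g s * s) hg hc hα hu₂ hu₄
  unfold action nehariFunctional
  rw [hquad]
  set K := c * (α ^ (3 / 2 : ℝ) + α ^ (4 / 3 : ℝ))
  set I₁ := ∫ x, u' x ^ 2 ∂μ
  set I₂ := ∫ x, u x ^ 2 ∂μ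
  set I₄ := ∫ x, max (u x) 0 ^ 4 ∂μ
  have hI₁ : 0 ≤ I₁ := integral_nonneg fun x => sq_nonneg _
  have hI₂ : 0 ≤ I₂ := integral_nonneg fun x => sq_nonneg _
  have hI₄ : 0 ≤ I₄ := integral_nonneg fun x => by positivity
  have hKI₂ : K * I₂ ≤ α * ρ / 16 * I₂ :=
    mul_le_mul_of_nonneg_right (hsmall.trans (min_le_left _ _)) hI₂
  have hKI₄ : K * I₄ ≤ 1 / 8 * I₄ :=
    mul_le_mul_of_nonneg_right (hsmall.trans (min_le_right _ _)) hI₄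
  have hmin : min (1 / 8) (α * ρ / 16) * (I₁ + I₂) ≤ 1 / 8 * I₁ + α * ρ / 16 * I₂ := by
    rw [mul_add]
    gcongr
    exacts [min_le_left _ _, min_le_right _ _]
  have hK : 0 ≤ K := by positivity
  linarith [mul_nonneg hK hI₂, mul_nonneg hK hI₄, neg_abs_le (∫ x, G (α * max (u x) 0 ^ 2) ∂μ),
    le_abs_self (∫ x, g (α * max (u x) 0 ^ 2) * (α * max (u x) 0 ^ 2) ∂μ)]

end Action

theorem le_of_mul_le_add_mul_sqrt {a C E N : ℝ} (ha : 0 < a) (hN : 0 ≤ N)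
    (h : a * N ≤ C + E * √N) : N ≤ 2 * C / a + (E / a) ^ 2 := by
  obtain ⟨s, hs, rfl⟩ : ∃ s, 0 ≤ s ∧ N = s ^ 2 := ⟨√N, sqrt_nonneg N, (sq_sqrt hN).symm⟩
  rw [sqrt_sq hs] at h
  have hexpand : (E - a * s) ^ 2 / (2 * a) = E ^ 2 / a / 2 - E * s + a * s ^ 2 / 2 := by
    field_simp
    ring
  have : 0 ≤ (E - a * s) ^ 2 / (2 * a) := by positivity
  calc s ^ 2 = a * s ^ 2 / a := by field_simp
    _ ≤ (2 * C + E ^ 2 / a) / a := by gcongr; linarith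
    _ = 2 * C / a + (E / a) ^ 2 := by ring

theorem palais_smale_bounded_general (ρ c : ℝ) (hρ : 0 < ρ) (hc : 0 < c)
    (g G : ℝ → ℝ)
    (hGbound : ∀ s : ℝ, 0 ≤ s → |G s| ≤ c * (s ^ ((3 : ℝ)/2) + s ^ ((4 : ℝ)/3)))
    (hgbound : ∀ s : ℝ, 0 ≤ s → |g s * s| ≤ c * (s ^ ((3 : ℝ)/2) + s ^ ((4 : ℝ)/3))) :
    ∃ α₀ > (0 : ℝ), ∀ α : ℝ, 0 < α → α ≤ α₀ →
      ∀ (U U' : ℕ → ℝ → ℝ) (AU A'U ε : ℕ → ℝ),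
        (∀ n x, HasDerivAt (U n) (U' n x) x) →
        (∀ n, Integrable (fun x => (U' n x) ^ 2) volume) →
        (∀ n, Integrable (fun x => (U n x) ^ 2) volume) →
        (∀ n, Integrable (fun x => (max (U n x) 0) ^ 4) volume) →
        (∀ n, Integrable (fun x => G (α * (max (U n x) 0) ^ 2)) volume) →
        (∀ n, Integrable
          (fun x => g (α * (max (U n x) 0) ^ 2) * (α * (max (U n x) 0) ^ 2)) volume) →
        -- the values of the action functional A along the sequence
        (∀ n, AU n = 1/2 * (∫ x : ℝ, ((U' n x) ^ 2 + α * ρ * (U n x) ^ 2))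
          + 1/2 * (∫ x : ℝ, G (α * (max (U n x) 0) ^ 2))
          - 1/4 * ∫ x : ℝ, (max (U n x) 0) ^ 4) →
        -- the values A'(Uₙ)[Uₙ]
        (∀ n, A'U n = (∫ x : ℝ, ((U' n x) ^ 2 + α * ρ * (U n x) ^ 2))
          + (∫ x : ℝ, g (α * (max (U n x) 0) ^ 2) * (α * (max (U n x) 0) ^ 2))
          - ∫ x : ℝ, (max (U n x) 0) ^ 4) →
        -- A(Uₙ) is bounded
        (∃ C : ℝ, ∀ n, |AU n| ≤ C) →
        -- A'(Uₙ)[Uₙ] = o(‖Uₙ‖_{H¹})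
        Tendsto ε atTop (nhds 0) →
        (∀ n, |A'U n| ≤ ε n *
          Real.sqrt ((∫ x : ℝ, (U' n x) ^ 2) + ∫ x : ℝ, (U n x) ^ 2)) →
        -- conclusion: the sequence is bounded in H¹(ℝ)
        ∃ M : ℝ, ∀ n, (∫ x : ℝ, (U' n x) ^ 2) + (∫ x : ℝ, (U n x) ^ 2) ≤ M := by
  obtain ⟨α₀, hα₀, hsmall⟩ :=
    mem_nhdsGT_iff_exists_Ioc_subset.1 (eventually_growth_coeff_le c hρ)
  refine ⟨α₀, hα₀, fun α hα hαα₀ U U' AU A'U ε _ hU' hU₂ hU₄ _ _ hAU hA'U hAU_bdd hε hA'U_le =>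
    ?_⟩
  obtain ⟨C, hC⟩ := hAU_bdd
  obtain ⟨E, hE⟩ := hε.bddAbove_range
  have hm : 0 < min (1 / 8) (α * ρ / 16) := by positivity
  refine ⟨2 * C / _ + (3 / 8 * E / _) ^ 2, fun n => le_of_mul_le_add_mul_sqrt hm (by positivity) ?_⟩
  calc _ ≤ action volume ρ α G (U n) (U' n)
        - 3 / 8 * nehariFunctional volume ρ α g (U n) (U' n) :=
        min_mul_sq_norm_le_action_sub_nehari hc.le hα.le hGbound hgbound (hsmall ⟨hα, hαα₀⟩)
          (hU' n) (hU₂ n) (hU₄ n)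
    _ = AU n - 3 / 8 * A'U n := by rw [hAU n, hA'U n]; rfl
    _ ≤ _ := by
      have hεE := mul_le_mul_of_nonneg_right (hE ⟨n, rfl⟩) (sqrt_nonneg
        ((∫ x, U' n x ^ 2) + ∫ x, U n x ^ 2))
      linarith [le_abs_self (AU n), neg_abs_le (A'U n), hC n, hA'U_le n]

theorem palais_smale_bounded (ρ b c : ℝ) (hρ : 0 < ρ) (hb : 0 < b) (hc : 0 < c)
    (g G : ℝ → ℝ)
    (hG' : ∀ s : ℝ, 0 ≤ s → HasDerivAt G (g s) s)
    (hGbound : ∀ s : ℝ, 0 ≤ s → |G s| ≤ c * (s ^ ((3 : ℝ)/2) + s ^ ((4 : ℝ)/3)))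
    (hgbound : ∀ s : ℝ, 0 ≤ s → |g s * s| ≤ c * (s ^ ((3 : ℝ)/2) + s ^ ((4 : ℝ)/3))) :
    ∃ α₀ > (0 : ℝ), ∀ α : ℝ, 0 < α → α ≤ α₀ →
      ∀ (U U' : ℕ → ℝ → ℝ) (AU A'U ε : ℕ → ℝ),
        (∀ n x, HasDerivAt (U n) (U' n x) x) →
        (∀ n, Integrable (fun x => (U' n x) ^ 2) volume) →
        (∀ n, Integrable (fun x => (U n x) ^ 2) volume) →
        (∀ n, Integrable (fun x => (max (U n x) 0) ^ 4) volume) →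
        (∀ n, Integrable (fun x => G (α * (max (U n x) 0) ^ 2)) volume) →
        (∀ n, Integrable
          (fun x => g (α * (max (U n x) 0) ^ 2) * (α * (max (U n x) 0) ^ 2)) volume) →
        -- the values of the action functional A along the sequence
        (∀ n, AU n = 1/2 * (∫ x : ℝ, ((U' n x) ^ 2 + α * ρ * (U n x) ^ 2))
          + 1/2 * (∫ x : ℝ, G (α * (max (U n x) 0) ^ 2))
          - 1/4 * ∫ x : ℝ, (max (U n x) 0) ^ 4) →
        -- the values A'(Uₙ)[Uₙ]
        (∀ n, A'U n = (∫ x : ℝ, ((U' n x) ^ 2 + α * ρ * (U n x) ^ 2))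
          + (∫ x : ℝ, g (α * (max (U n x) 0) ^ 2) * (α * (max (U n x) 0) ^ 2))
          - ∫ x : ℝ, (max (U n x) 0) ^ 4) →
        -- A(Uₙ) is bounded
        (∃ C : ℝ, ∀ n, |AU n| ≤ C) →
        -- A'(Uₙ)[Uₙ] = o(‖Uₙ‖_{H¹})
        Tendsto ε atTop (nhds 0) →
        (∀ n, |A'U n| ≤ ε n *
          Real.sqrt ((∫ x : ℝ, (U' n x) ^ 2) + ∫ x : ℝ, (U n x) ^ 2)) →
        -- conclusion: the sequence is bounded in H¹(ℝ)
        ∃ M : ℝ, ∀ n, (∫ x : ℝ, (U' n x) ^ 2) + (∫ x : ℝ, (U n x) ^ 2) ≤ M :=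
  palais_smale_bounded_general ρ c hρ hc g G hGbound hgbound
end
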